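/- Let M be a positive even integer and define Φ ∈ ℂ^{M×M} by Φ_{u,v} = (1/√M) · exp(−i·π/4) · exp(i·π·(u − v)^2 / M) for u, v ∈ Fin M. Then Φ is unitary: Φ · Φᴴ = 1 (equivalently, ∑_{l=0}^{M−1} exp(i·π·((u−l)^2 − (v−l)^2)/M) = M if u = v and 0 otherwise, for 0 ≤ u, v < M). -/

import Mathlib

/-!
Entry `(u, v)` of `Φ Φᴴ` is `1/M` times the sum over `l` of `e^{iπ((u-l)² - (v-l)²)/M}`. The
quadratic terms in `l` cancel, leaving `e^{iπ(u²-v²)/M}` times the geometric sum of the powers of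
`ω^{v-u}`, where `ω = e^{2πi/M}` is a primitive `M`-th root of unity. That sum is `M` for `u = v`
and vanishes otherwise, since then `M ∤ v - u`.
-/

open Complex Matrix Finset ComplexConjugate Real

theorem IsPrimitiveRoot.geom_sum_zpow_eq_zero {K : Type*} [Field K] {ω : K} {n : ℕ}
    (hω : IsPrimitiveRoot ω n) {k : ℤ} (hk : ¬ (n : ℤ) ∣ k) :
    ∑ l ∈ range n, (ω ^ k) ^ l = 0 := by
  have hne : ω ^ k ≠ 1 := mt (hω.zpow_eq_one_iff_dvd k).1 hk
  have hpow : (ω ^ k) ^ n = 1 := by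
    rw [← zpow_natCast, ← _root_.zpow_mul, mul_comm, _root_.zpow_mul, hω.zpow_eq_one,
      _root_.one_zpow]
  rw [geom_sum_eq hne, hpow, sub_self, zero_div]

theorem Fin.eq_of_natCast_dvd_sub {n : ℕ} {u v : Fin n} (h : (n : ℤ) ∣ (v : ℤ) - u) : u = v :=
  Fin.ext ((Nat.modEq_iff_dvd.2 h).eq_of_lt_of_lt u.2 v.2)

theorem chirp_mul_conj_chirp (M : ℕ) (a b : ℤ) (l : ℕ) :
    exp (I * π * ((a : ℂ) - (l : ℤ)) ^ 2 / M) * conj (exp (I * π * ((b : ℂ) - (l : ℤ)) ^ 2 / M)) =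
      exp (I * π * ((a : ℂ) ^ 2 - b ^ 2) / M) * (exp (2 * π * I / M) ^ (b - a)) ^ l := by
  rw [← Complex.exp_conj, ← exp_int_mul, ← Complex.exp_nat_mul, ← Complex.exp_add,
    ← Complex.exp_add]
  congr 1
  simp only [map_div₀, map_mul, map_pow, map_sub, conj_I, conj_ofReal, map_intCast, map_natCast]
  push_cast
  ring

theorem one_div_sqrt_mul_mul_conj (x : ℝ) (hx : 0 ≤ x) {z : ℂ} (hz : ‖z‖ = 1) :
    1 / (√x : ℂ) * z * conj (1 / (√x : ℂ) * z) = 1 / x := by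
  rw [mul_conj', norm_mul, hz, mul_one, norm_div, norm_one, norm_real,
    Real.norm_of_nonneg (Real.sqrt_nonneg x)]
  push_cast
  rw [div_pow, one_pow, ← ofReal_pow, Real.sq_sqrt hx]

theorem dfnt_unitary_general (M : ℕ)
    (Φ : Matrix (Fin M) (Fin M) ℂ)
    (hΦ : ∀ u v : Fin M,
      Φ u v = (1 / (Real.sqrt M : ℂ)) * Complex.exp (-Complex.I * Real.pi / 4)
        * Complex.exp (Complex.I * Real.pi * (((u : ℤ) - (v : ℤ)) : ℂ) ^ 2 / M)) :
    Φ * Φᴴ = 1 := by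
  ext u v
  have hω := isPrimitiveRoot_exp M u.pos.ne'
  have hc : 1 / (√M : ℂ) * exp (-I * π / 4) * conj (1 / (√M : ℂ) * exp (-I * π / 4)) = 1 / M := by
    rw [one_div_sqrt_mul_mul_conj M M.cast_nonneg (by simp [norm_exp]), ofReal_natCast]
  set ζ := exp (2 * π * I / M) ^ ((v : ℤ) - u)
  calc (Φ * Φᴴ) u v
      = ∑ l : Fin M, 1 / M * exp (I * π * (((u : ℤ) : ℂ) ^ 2 - ((v : ℤ) : ℂ) ^ 2) / M) *
          ζ ^ (l : ℕ) := by
        refine (mul_apply ..).trans (Finset.sum_congr rfl fun l _ => ?_)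
        rw [conjTranspose_apply, hΦ, hΦ, star_def, map_mul, mul_mul_mul_comm, hc,
          chirp_mul_conj_chirp, ← mul_assoc]
    _ = 1 / M * exp (I * π * (((u : ℤ) : ℂ) ^ 2 - ((v : ℤ) : ℂ) ^ 2) / M) *
          ∑ l ∈ range M, ζ ^ l := by
        rw [← mul_sum, Fin.sum_univ_eq_sum_range (ζ ^ ·)]
    _ = (1 : Matrix (Fin M) (Fin M) ℂ) u v := by
        rcases eq_or_ne u v with rfl | huv
        · simp [ζ, u.pos.ne']
        · rw [hω.geom_sum_zpow_eq_zero (mt Fin.eq_of_natCast_dvd_sub huv), mul_zero,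
            one_apply_ne huv]

/-- Unitarity of the discrete Fresnel transform of even order `M`: the matrix
with entries `Φ u v = (1/√M) e^{-iπ/4} e^{iπ(u-v)²/M}` satisfies `Φ Φᴴ = 1`,
i.e., the `M` chirps form an orthonormal basis. -/
theorem dfnt_unitary (M : ℕ) (hM : 0 < M) (hMeven : Even M)
    (Φ : Matrix (Fin M) (Fin M) ℂ)
    (hΦ : ∀ u v : Fin M,
      Φ u v = (1 / (Real.sqrt M : ℂ)) * Complex.exp (-Complex.I * Real.pi / 4)
        * Complex.exp (Complex.I * Real.pi * (((u : ℤ) - (v : ℤ)) : ℂ) ^ 2 / M)) :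
    Φ * Φᴴ = 1 :=
  dfnt_unitary_general M Φ hΦ
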